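/- arXiv:2204.02343 — 2 statements merged into one kernel-verified Lean document; each statement's English description precedes it below -/
import Mathlib

section
/- Assume μ, σ : ℝ → ℝ satisfy conditions (A1)–(A4) with parameters p₀, p₁ ∈ [2,∞), ℓ_μ ∈ (0,∞), ℓ_σ ∈ [0, ℓ_μ/2], and let μ̃, σ̃ : ℝ → ℝ be the transformed coefficients defined via the function G. Then μ̃ and σ̃ are continuous on ℝ. -/
/-- For `ξ₁ < … < ξ_k` and `i ∈ {0,…,k}`, `piece k ξ i` is the open interval
`(ξ_i, ξ_{i+1})` of the partition of `ℝ`, with the conventions `ξ₀ = -∞`, `ξ_{k+1} = ∞`. -/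
def piece (k : ℕ) (ξ : Fin k → ℝ) (i : Fin (k + 1)) : Set ℝ :=
  {x : ℝ | (∀ j : Fin k, (j : ℕ) < (i : ℕ) → ξ j < x) ∧
    ∀ j : Fin k, (i : ℕ) ≤ (j : ℕ) → x < ξ j}

/-- The bump function `φ(x) = (1 - x²)⁴ · 1_{[-1,1]}(x)`. -/
noncomputable def phi (x : ℝ) : ℝ := if x ∈ Set.Icc (-1 : ℝ) 1 then (1 - x ^ 2) ^ 4 else 0

/-- The transformation `G(x) = x + Σ_{i=1}^k α_i (x - ξ_i)|x - ξ_i| φ((x - ξ_i)/ν)`. -/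
noncomputable def Gfun (k : ℕ) (ξ α : Fin k → ℝ) (ν : ℝ) (x : ℝ) : ℝ :=
  x + ∑ i : Fin k, α i * (x - ξ i) * |x - ξ i| * phi ((x - ξ i) / ν)

/-!
Write `G x = x + ∑ i, α i * b (x - ξ i)` with the bump `b u = u |u| φ(u/ν)`. Since
`φ t = ((1 - t²)⁺)⁴` and `y ↦ (y⁺)^(n+2)` has the continuous derivative `(n+2) (y⁺)^(n+1)`, the bump
is `C¹` with `b' 0 = 0`, and off `0` it is `C²` with `b'' u = 2 sign(u) φ(u/ν) + r u`, where `r` is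
continuous and `r 0 = 0`; hence `b''(0±) = ±2`. The bumps live on the disjoint intervals
`[ξ i - ν, ξ i + ν]`, so `G' (ξ i) = 1` and `G''(ξ i ±) = ±2 α i`.

Off the nodes `μ`, `σ`, `G'` and `G''` are continuous. At a node the jump of `μ` is cancelled by the
jump of `½ G'' σ²`: both one-sided limits of `G' μ + ½ G'' σ²` equal `(μ(ξ i -) + μ(ξ i +)) / 2`, and so
does its value, by the choice of `G'' (ξ i)`. Finally `G⁻¹` is continuous, being the inverse of a
continuous bijection of `ℝ`.
-/

open Set Filter Topology

lemma hasDerivAt_posPart_pow (n : ℕ) (x : ℝ) :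
    HasDerivAt (fun y : ℝ => y⁺ ^ (n + 2)) ((n + 2) * x⁺ ^ (n + 1)) x := by
  refine hasDerivAt_of_hasDerivAt_of_ne' (f := fun y : ℝ => y⁺ ^ (n + 2))
    (g := fun y : ℝ => (n + 2) * y⁺ ^ (n + 1)) (x := 0) (fun y hy => ?_) (by fun_prop) (by fun_prop) x
  rcases hy.lt_or_gt with hy | hy
  · have hzero : (fun z : ℝ => z⁺ ^ (n + 2)) =ᶠ[𝓝 y] fun _ => 0 := by
      filter_upwards [Iio_mem_nhds hy] with z (hz : z < 0)
      simp [posPart_eq_zero.mpr hz.le]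
    simpa [posPart_eq_zero.mpr hy.le] using (hasDerivAt_const y (0 : ℝ)).congr_of_eventuallyEq hzero
  · have hid : (fun z : ℝ => z⁺ ^ (n + 2)) =ᶠ[𝓝 y] fun z => z ^ (n + 2) := by
      filter_upwards [Ioi_mem_nhds hy] with z (hz : 0 < z)
      rw [posPart_eq_self.mpr hz.le]
    rw [posPart_eq_self.mpr hy.le]
    simpa using (hasDerivAt_pow (n + 2) y).congr_of_eventuallyEq hid

lemma posPart_one_sub_sq_eq_zero {t : ℝ} (ht : 1 ≤ |t|) : (1 - t ^ 2)⁺ = 0 :=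
  posPart_eq_zero.mpr (by nlinarith [one_le_sq_iff_one_le_abs t |>.mpr ht])

lemma phi_eq (t : ℝ) : phi t = (1 - t ^ 2)⁺ ^ 4 := by
  unfold phi
  split_ifs with ht
  · rw [posPart_eq_self.mpr (by nlinarith [ht.1, ht.2])]
  · rw [posPart_one_sub_sq_eq_zero]
    · simp
    · rw [mem_Icc, not_and_or, not_le, not_le] at ht
      exact le_abs'.2 (ht.imp (fun h => by linarith) le_of_lt)

noncomputable def phiDeriv (t : ℝ) : ℝ := -8 * t * (1 - t ^ 2)⁺ ^ 3

noncomputable def phiDeriv2 (t : ℝ) : ℝ := 48 * t ^ 2 * (1 - t ^ 2)⁺ ^ 2 - 8 * (1 - t ^ 2)⁺ ^ 3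

lemma hasDerivAt_posPart_one_sub_sq_pow (n : ℕ) (t : ℝ) :
    HasDerivAt (fun t : ℝ => (1 - t ^ 2)⁺ ^ (n + 2)) (-2 * (n + 2) * t * (1 - t ^ 2)⁺ ^ (n + 1)) t := by
  refine ((hasDerivAt_posPart_pow n (1 - t ^ 2)).comp t
    ((hasDerivAt_pow 2 t).const_sub 1)).congr_deriv ?_
  push_cast
  ring

lemma hasDerivAt_phi (t : ℝ) : HasDerivAt phi (phiDeriv t) t := by
  rw [show phi = fun t : ℝ => (1 - t ^ 2)⁺ ^ 4 from funext phi_eq]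
  refine (hasDerivAt_posPart_one_sub_sq_pow 2 t).congr_deriv ?_
  norm_num [phiDeriv]

lemma hasDerivAt_phiDeriv (t : ℝ) : HasDerivAt phiDeriv (phiDeriv2 t) t := by
  refine (((hasDerivAt_id t).const_mul (-8)).mul
    (hasDerivAt_posPart_one_sub_sq_pow 1 t)).congr_deriv ?_
  simp only [phiDeriv2, id]
  ring

@[fun_prop]
lemma continuous_phi : Continuous phi := by
  rw [show phi = fun t : ℝ => (1 - t ^ 2)⁺ ^ 4 from funext phi_eq]; fun_prop

@[fun_prop]
lemma continuous_phiDeriv : Continuous phiDeriv := by unfold phiDeriv; fun_prop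

@[fun_prop]
lemma continuous_phiDeriv2 : Continuous phiDeriv2 := by unfold phiDeriv2; fun_prop

lemma hasDerivAt_mul_abs (u : ℝ) : HasDerivAt (fun u : ℝ => u * |u|) (2 * |u|) u := by
  refine hasDerivAt_of_hasDerivAt_of_ne' (f := fun u : ℝ => u * |u|) (g := fun u : ℝ => 2 * |u|)
    (x := 0) (fun v hv => ?_) (by fun_prop) (by fun_prop) u
  refine ((hasDerivAt_id' v).mul (hasDerivAt_abs hv)).congr_deriv ?_
  rw [self_mul_sign]
  ring

noncomputable def bump (ν u : ℝ) : ℝ := u * |u| * phi (u / ν)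

noncomputable def bumpDeriv (ν u : ℝ) : ℝ :=
  2 * |u| * phi (u / ν) + u * |u| * phiDeriv (u / ν) / ν

noncomputable def bumpDeriv2 (ν u : ℝ) : ℝ :=
  2 * SignType.sign u * phi (u / ν) + 4 * |u| * phiDeriv (u / ν) / ν
    + u * |u| * phiDeriv2 (u / ν) / ν ^ 2

lemma hasDerivAt_bump (ν u : ℝ) : HasDerivAt (bump ν) (bumpDeriv ν u) u := by
  refine ((hasDerivAt_mul_abs u).mul
    ((hasDerivAt_phi (u / ν)).comp u ((hasDerivAt_id' u).div_const ν))).congr_deriv ?_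
  simp only [bumpDeriv, Function.comp_apply]
  ring

lemma hasDerivAt_bumpDeriv (ν : ℝ) {u : ℝ} (hu : u ≠ 0) :
    HasDerivAt (bumpDeriv ν) (bumpDeriv2 ν u) u := by
  have hdiv := (hasDerivAt_id' u).div_const ν
  have h₁ := ((hasDerivAt_abs hu).const_mul 2).mul ((hasDerivAt_phi (u / ν)).comp u hdiv)
  have h₂ := ((hasDerivAt_mul_abs u).mul ((hasDerivAt_phiDeriv (u / ν)).comp u hdiv)).div_const ν
  refine (h₁.add h₂).congr_deriv ?_
  simp only [bumpDeriv2, Function.comp_apply]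
  ring

@[fun_prop]
lemma continuous_bumpDeriv (ν : ℝ) : Continuous (bumpDeriv ν) := by
  unfold bumpDeriv; fun_prop

lemma continuousAt_bumpDeriv2 (ν : ℝ) {u : ℝ} (hu : u ≠ 0) : ContinuousAt (bumpDeriv2 ν) u := by
  have hsign : ContinuousAt (fun u : ℝ => (SignType.sign u : ℝ)) u :=
    (continuous_of_discreteTopology (f := ((↑) : SignType → ℝ))).continuousAt.comp
      (continuousAt_sign_of_ne_zero hu)
  unfold bumpDeriv2; fun_prop

lemma bumpDeriv_zero (ν : ℝ) : bumpDeriv ν 0 = 0 := by simp [bumpDeriv]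

lemma posPart_one_sub_div_sq_eq_zero {ν u : ℝ} (hν : 0 < ν) (hu : ν ≤ |u|) :
    (1 - (u / ν) ^ 2)⁺ = 0 :=
  posPart_one_sub_sq_eq_zero (by rwa [abs_div, abs_of_pos hν, le_div_iff₀ hν, one_mul])

lemma bumpDeriv_eq_zero {ν u : ℝ} (hν : 0 < ν) (hu : ν ≤ |u|) : bumpDeriv ν u = 0 := by
  simp [bumpDeriv, phi_eq, phiDeriv, posPart_one_sub_div_sq_eq_zero hν hu]

lemma bumpDeriv2_eq_zero {ν u : ℝ} (hν : 0 < ν) (hu : ν ≤ |u|) : bumpDeriv2 ν u = 0 := by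
  simp [bumpDeriv2, phi_eq, phiDeriv, phiDeriv2, posPart_one_sub_div_sq_eq_zero hν hu]

lemma tendsto_bumpDeriv2_comp {α : Type*} {l : Filter α} {f : α → ℝ} {c : ℝ}
    (hf : Tendsto f l (𝓝 0)) (hsign : Tendsto (fun x => (SignType.sign (f x) : ℝ)) l (𝓝 c))
    (ν : ℝ) : Tendsto (fun x => bumpDeriv2 ν (f x)) l (𝓝 (2 * c)) := by
  have hcomp : ∀ g : ℝ → ℝ, Continuous g → Tendsto (fun x => g (f x)) l (𝓝 (g 0)) :=
    fun g hg => (hg.tendsto 0).comp hf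
  have := ((tendsto_const_nhds (x := (2 : ℝ))).mul hsign).mul
    (hcomp (fun u => phi (u / ν)) (by fun_prop)) |>.add
    (hcomp (fun u => 4 * |u| * phiDeriv (u / ν) / ν) (by fun_prop)) |>.add
    (hcomp (fun u => u * |u| * phiDeriv2 (u / ν) / ν ^ 2) (by fun_prop))
  have hval : 2 * c * phi (0 / ν) + 4 * |0| * phiDeriv (0 / ν) / ν
      + 0 * |0| * phiDeriv2 (0 / ν) / ν ^ 2 = 2 * c := by simp [phi]
  rwa [hval] at this

section Gfun

variable {k : ℕ} {ξ α : Fin k → ℝ} {ν : ℝ}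

noncomputable def GfunDeriv (k : ℕ) (ξ α : Fin k → ℝ) (ν x : ℝ) : ℝ :=
  1 + ∑ i, α i * bumpDeriv ν (x - ξ i)

noncomputable def GfunDeriv2 (k : ℕ) (ξ α : Fin k → ℝ) (ν x : ℝ) : ℝ :=
  ∑ i, α i * bumpDeriv2 ν (x - ξ i)

lemma Gfun_eq_sum_bump : Gfun k ξ α ν = fun x => x + ∑ i, α i * bump ν (x - ξ i) := by
  funext x
  simp only [Gfun, bump, mul_assoc]

lemma hasDerivAt_Gfun (x : ℝ) : HasDerivAt (Gfun k ξ α ν) (GfunDeriv k ξ α ν x) x := by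
  rw [Gfun_eq_sum_bump]
  refine (hasDerivAt_id' x).add (HasDerivAt.fun_sum fun i _ => ?_)
  simpa using ((hasDerivAt_bump ν (x - ξ i)).comp x ((hasDerivAt_id' x).sub_const (ξ i))).const_mul (α i)

lemma hasDerivAt_GfunDeriv {x : ℝ} (hx : ∀ i, x ≠ ξ i) :
    HasDerivAt (GfunDeriv k ξ α ν) (GfunDeriv2 k ξ α ν x) x := by
  refine (HasDerivAt.fun_sum fun i _ => ?_).const_add 1
  simpa using ((hasDerivAt_bumpDeriv ν (sub_ne_zero.2 (hx i))).comp x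
    ((hasDerivAt_id' x).sub_const (ξ i))).const_mul (α i)

lemma continuous_GfunDeriv : Continuous (GfunDeriv k ξ α ν) := by
  unfold GfunDeriv; fun_prop

lemma continuousAt_GfunDeriv2 {x : ℝ} (hx : ∀ i, x ≠ ξ i) : ContinuousAt (GfunDeriv2 k ξ α ν) x :=
  tendsto_finsetSum _ fun i _ => continuousAt_const.mul
    ((continuousAt_bumpDeriv2 ν (sub_ne_zero.2 (hx i))).comp (f := fun x => x - ξ i) (by fun_prop))

lemma GfunDeriv_apply_eq_one (hν : 0 < ν) (hsep : ∀ i j, i ≠ j → ν ≤ |ξ i - ξ j|) (i : Fin k) :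
    GfunDeriv k ξ α ν (ξ i) = 1 := by
  rw [GfunDeriv, add_eq_left]
  refine Finset.sum_eq_zero fun j _ => ?_
  rcases eq_or_ne i j with rfl | hij
  · simp [bumpDeriv_zero]
  · rw [bumpDeriv_eq_zero hν (hsep i j hij), mul_zero]

lemma tendsto_GfunDeriv2 (hν : 0 < ν) (hsep : ∀ i j, i ≠ j → ν ≤ |ξ i - ξ j|) {i : Fin k}
    {l : Filter ℝ} {c : ℝ} (hl : l ≤ 𝓝 (ξ i))
    (hsign : Tendsto (fun x => (SignType.sign (x - ξ i) : ℝ)) l (𝓝 c)) :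
    Tendsto (GfunDeriv2 k ξ α ν) l (𝓝 (2 * c * α i)) := by
  have hterm : ∀ j, Tendsto (fun x => α j * bumpDeriv2 ν (x - ξ j)) l
      (𝓝 (if i = j then 2 * c * α i else 0)) := by
    intro j
    split_ifs with hij
    · subst hij
      have hf : Tendsto (fun x => x - ξ i) l (𝓝 0) :=
        ((continuous_sub_right (ξ i)).tendsto' (ξ i) 0 (sub_self _)).mono_left hl
      simpa [mul_comm] using (tendsto_bumpDeriv2_comp hf hsign ν).const_mul (α i)
    · have hcont : ContinuousAt (fun x => α j * bumpDeriv2 ν (x - ξ j)) (ξ i) :=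
        continuousAt_const.mul ((continuousAt_bumpDeriv2 ν
          (abs_pos.1 (hν.trans_le (hsep i j hij)))).comp (f := fun x => x - ξ j) (by fun_prop))
      simpa [bumpDeriv2_eq_zero hν (hsep i j hij)] using hcont.tendsto.mono_left hl
  have hsum := tendsto_finsetSum Finset.univ fun j _ => hterm j
  rwa [Finset.sum_ite_eq, if_pos (Finset.mem_univ i)] at hsum

lemma tendsto_GfunDeriv2_nhdsGT (hν : 0 < ν) (hsep : ∀ i j, i ≠ j → ν ≤ |ξ i - ξ j|) (i : Fin k) :
    Tendsto (GfunDeriv2 k ξ α ν) (𝓝[>] ξ i) (𝓝 (2 * α i)) := by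
  have hsign : Tendsto (fun x => (SignType.sign (x - ξ i) : ℝ)) (𝓝[>] ξ i) (𝓝 1) :=
    tendsto_const_nhds.congr' <| eventually_nhdsWithin_of_forall fun x (hx : ξ i < x) => by
      simp [sign_pos (sub_pos.2 hx)]
  simpa using tendsto_GfunDeriv2 hν hsep nhdsWithin_le_nhds hsign

lemma tendsto_GfunDeriv2_nhdsLT (hν : 0 < ν) (hsep : ∀ i j, i ≠ j → ν ≤ |ξ i - ξ j|) (i : Fin k) :
    Tendsto (GfunDeriv2 k ξ α ν) (𝓝[<] ξ i) (𝓝 (-(2 * α i))) := by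
  have hsign : Tendsto (fun x => (SignType.sign (x - ξ i) : ℝ)) (𝓝[<] ξ i) (𝓝 (-1)) :=
    tendsto_const_nhds.congr' <| eventually_nhdsWithin_of_forall fun x (hx : x < ξ i) => by
      simp [sign_neg (sub_neg.2 hx)]
  simpa using tendsto_GfunDeriv2 hν hsep nhdsWithin_le_nhds hsign

end Gfun

lemma lt_abs_sub_of_ne {k : ℕ} {ξ : Fin k → ℝ} (hξ : Monotone ξ) {d : ℝ}
    (hd : ∀ i j : Fin k, (i : ℕ) + 1 = j → d < ξ j - ξ i) {i j : Fin k} (hij : i ≠ j) :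
    d < |ξ i - ξ j| := by
  have key : ∀ i j : Fin k, i < j → d < ξ j - ξ i := fun i j hij => by
    have hsucc : (i : ℕ) + 1 < k := by omega
    have := hξ (show (⟨i + 1, hsucc⟩ : Fin k) ≤ j from Fin.le_def.2 hij)
    linarith [hd i ⟨i + 1, hsucc⟩ rfl]
  rcases hij.lt_or_gt with h | h
  · rw [abs_sub_comm]; exact (key i j h).trans_le (le_abs_self _)
  · exact (key j i h).trans_le (le_abs_self _)

lemma piece_mem_nhds {k : ℕ} {ξ : Fin k → ℝ} {i : Fin (k + 1)} {x : ℝ} (hx : x ∈ piece k ξ i) :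
    piece k ξ i ∈ 𝓝 x :=
  (eventually_all.2 fun j => (eventually_all.2 fun hj => eventually_gt_nhds (hx.1 j hj))).and
    (eventually_all.2 fun j => (eventually_all.2 fun hj => eventually_lt_nhds (hx.2 j hj)))

lemma exists_mem_piece {k : ℕ} {ξ : Fin k → ℝ} (hξ : Monotone ξ) {x : ℝ} (hx : ∀ j, x ≠ ξ j) :
    ∃ i, x ∈ piece k ξ i := by
  classical
  have hex : ∃ m, m ≤ k ∧ ∀ j : Fin k, m ≤ j → x < ξ j :=
    ⟨k, le_rfl, fun j hj => absurd j.2 (by omega)⟩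
  refine ⟨⟨Nat.find hex, Nat.lt_succ_of_le (Nat.find_spec hex).1⟩,
    fun j hj => ?_, (Nat.find_spec hex).2⟩
  obtain ⟨j', hjj', hj'x⟩ : ∃ j' : Fin k, (j : ℕ) ≤ j' ∧ ξ j' ≤ x := by
    simpa using Nat.find_min hex hj
  exact ((hξ (Fin.le_def.2 hjj')).trans hj'x).lt_of_ne (hx j).symm

lemma continuous_of_leftInverse_of_rightInverse {f g : ℝ → ℝ} (hf : Continuous f)
    (hgf : Function.LeftInverse g f) (hfg : Function.RightInverse g f) : Continuous g := by
  rcases hf.strictMono_of_inj hgf.injective with hmono | hanti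
  · exact Monotone.continuous_of_surjective
      (fun a b hab => hmono.le_iff_le.1 (by rwa [hfg a, hfg b])) hgf.surjective
  · have hdual : Monotone (OrderDual.toDual ∘ g) :=
      fun a b hab => OrderDual.toDual_le_toDual.2 (hanti.le_iff_ge.1 (by rwa [hfg a, hfg b]))
    exact continuous_ofDual.comp (hdual.continuous_of_surjective
      (OrderDual.toDual.surjective.comp hgf.surjective))

lemma continuousAt_of_abs_sub_le_rpow {f : ℝ → ℝ} {x c ℓ : ℝ} (hℓ : 0 ≤ ℓ)
    (hf : ∀ᶠ y in 𝓝 x, |f y - f x| ≤ c * (1 + |y| ^ ℓ + |x| ^ ℓ) * |y - x|) :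
    ContinuousAt f x := by
  have hbound : Tendsto (fun y => c * (1 + |y| ^ ℓ + |x| ^ ℓ) * |y - x|) (𝓝 x) (𝓝 0) := by
    have hrpow := Real.continuous_rpow_const hℓ
    have := ((show Continuous fun y => c * (1 + |y| ^ ℓ + |x| ^ ℓ) * |y - x| by fun_prop).tendsto x)
    simpa using this
  exact tendsto_iff_norm_sub_tendsto_zero.2
    (squeeze_zero' (Eventually.of_forall fun _ => norm_nonneg _) hf hbound)

lemma continuousAt_of_abs_sub_le_rpow_on_pieces {k : ℕ} {ξ : Fin k → ℝ} (hξ : Monotone ξ)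
    {f : ℝ → ℝ} {c ℓ : ℝ} (hℓ : 0 ≤ ℓ) (hf : ∀ i : Fin (k + 1), ∀ x ∈ piece k ξ i,
      ∀ y ∈ piece k ξ i, |f x - f y| ≤ c * (1 + |x| ^ ℓ + |y| ^ ℓ) * |x - y|)
    {x : ℝ} (hx : ∀ j, x ≠ ξ j) : ContinuousAt f x := by
  obtain ⟨i, hxi⟩ := exists_mem_piece hξ hx
  exact continuousAt_of_abs_sub_le_rpow hℓ
    (mem_of_superset (piece_mem_nhds hxi) fun y hy => hf i y hy x hxi)

lemma eventually_forall_ne_nhdsNE {k : ℕ} {ξ : Fin k → ℝ} (hξ : Function.Injective ξ) (i : Fin k) :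
    ∀ᶠ y in 𝓝[≠] ξ i, ∀ j, y ≠ ξ j := by
  refine eventually_all.2 fun j => ?_
  rcases eq_or_ne i j with rfl | hij
  · exact self_mem_nhdsWithin
  · exact eventually_ne_nhdsWithin (hξ.ne hij)

lemma continuousAt_add_half_mul_sq {μ σ g₁ g₂ : ℝ → ℝ} {a mL mR α : ℝ}
    (hμL : Tendsto μ (𝓝[<] a) (𝓝 mL)) (hμR : Tendsto μ (𝓝[>] a) (𝓝 mR))
    (hσ : ContinuousAt σ a) (hσa : σ a ≠ 0) (hg₁ : ContinuousAt g₁ a) (hg₁a : g₁ a = 1)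
    (hg₂L : Tendsto g₂ (𝓝[<] a) (𝓝 (-(2 * α)))) (hg₂R : Tendsto g₂ (𝓝[>] a) (𝓝 (2 * α)))
    (hα : α = (mL - mR) / (2 * σ a ^ 2)) (hg₂a : g₂ a = 2 * α + 2 * (mR - μ a) / σ a ^ 2) :
    ContinuousAt (fun x => g₁ x * μ x + 1 / 2 * g₂ x * σ x ^ 2) a := by
  have hside : ∀ {s : Set ℝ} {m c : ℝ}, Tendsto μ (𝓝[s] a) (𝓝 m) → Tendsto g₂ (𝓝[s] a) (𝓝 c) →
      Tendsto (fun x => g₁ x * μ x + 1 / 2 * g₂ x * σ x ^ 2) (𝓝[s] a)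
        (𝓝 (g₁ a * m + 1 / 2 * c * σ a ^ 2)) := fun hμ hg₂ =>
    ((hg₁.tendsto.mono_left nhdsWithin_le_nhds).mul hμ).add
      (((tendsto_const_nhds (x := (1 / 2 : ℝ))).mul hg₂).mul
        ((hσ.tendsto.mono_left nhdsWithin_le_nhds).pow 2))
  have hL : g₁ a * mL + 1 / 2 * -(2 * α) * σ a ^ 2 = g₁ a * μ a + 1 / 2 * g₂ a * σ a ^ 2 := by
    rw [hg₁a, hg₂a, hα]; field_simp; ring
  have hR : g₁ a * mR + 1 / 2 * (2 * α) * σ a ^ 2 = g₁ a * μ a + 1 / 2 * g₂ a * σ a ^ 2 := by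
    rw [hg₁a, hg₂a, hα]; field_simp; ring
  have hleft := hside hμL hg₂L
  have hright := hside hμR hg₂R
  rw [hL] at hleft
  rw [hR] at hright
  exact continuousAt_iff_continuous_left'_right'.2 ⟨hleft, hright⟩

theorem stmt_7_general (ℓμ ℓσ : ℝ)
    (hℓμ : 0 < ℓμ) (hℓσ0 : 0 ≤ ℓσ)
    (μ σ : ℝ → ℝ)
    -- (A2): discontinuity points ξ₁ < … < ξ_k, k ≥ 1
    (c₂ : ℝ) (k : ℕ) (ξ : Fin k → ℝ) (hξ : StrictMono ξ)
    (hA2ii : ∀ i : Fin (k + 1), ∀ x ∈ piece k ξ i, ∀ y ∈ piece k ξ i,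
      |μ x - μ y| ≤ c₂ * (1 + |x| ^ ℓμ + |y| ^ ℓμ) * |x - y|)
    -- (A3)
    (c₃ : ℝ)
    (hA3 : ∀ x y : ℝ, |σ x - σ y| ≤ c₃ * (1 + |x| ^ ℓσ + |y| ^ ℓσ) * |x - y|)
    -- (A4)
    (hA4 : ∀ i : Fin k, σ (ξ i) ≠ 0)
    -- one-sided limits μ(ξ_i-) and μ(ξ_i+)
    (μm μp : Fin k → ℝ)
    (hμm : ∀ i : Fin k, Filter.Tendsto μ (nhdsWithin (ξ i) (Set.Iio (ξ i))) (nhds (μm i)))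
    (hμp : ∀ i : Fin k, Filter.Tendsto μ (nhdsWithin (ξ i) (Set.Ioi (ξ i))) (nhds (μp i)))
    -- α_i = (μ(ξ_i-) - μ(ξ_i+)) / (2 σ(ξ_i)²)
    (α : Fin k → ℝ) (hα : ∀ i : Fin k, α i = (μm i - μp i) / (2 * (σ (ξ i)) ^ 2))
    -- ν ∈ (0, ρ_{ξ,α}):  ν·8|α_i| < 1 encodes ν < 1/(8|α_i|) with the convention 1/0 = ∞
    (ν : ℝ) (hν0 : 0 < ν)
    (hν2 : ∀ i j : Fin k, (i : ℕ) + 1 = (j : ℕ) → ν < (ξ j - ξ i) / 2)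
    -- G is differentiable with derivative G'; G' is differentiable off the points ξ_i
    -- with derivative G'', extended to the points ξ_i by the prescribed formula
    (G' G'' Ginv : ℝ → ℝ)
    (hG' : ∀ x : ℝ, HasDerivAt (Gfun k ξ α ν) (G' x) x)
    (hG''a : ∀ x : ℝ, (∀ i : Fin k, x ≠ ξ i) → HasDerivAt G' (G'' x) x)
    (hG''b : ∀ i : Fin k, G'' (ξ i) = 2 * α i + 2 * (μp i - μ (ξ i)) / (σ (ξ i)) ^ 2)
    -- Ginv is the inverse of the bijection G
    (hGinv1 : ∀ x : ℝ, Ginv (Gfun k ξ α ν x) = x)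
    (hGinv2 : ∀ x : ℝ, Gfun k ξ α ν (Ginv x) = x) :
    -- μ̃ = (G'·μ + ½·G''·σ²) ∘ G⁻¹  and  σ̃ = (G'·σ) ∘ G⁻¹
    Continuous (fun x : ℝ =>
      G' (Ginv x) * μ (Ginv x) + (1 / 2) * G'' (Ginv x) * (σ (Ginv x)) ^ 2) ∧
    Continuous (fun x : ℝ => G' (Ginv x) * σ (Ginv x)) := by
  have hsep : ∀ i j, i ≠ j → ν ≤ |ξ i - ξ j| := fun i j hij =>
    (lt_abs_sub_of_ne hξ.monotone (fun i j h => by linarith [hν2 i j h]) hij).le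
  obtain rfl : G' = GfunDeriv k ξ α ν := funext fun x => (hG' x).unique (hasDerivAt_Gfun x)
  have hG'' : ∀ x, (∀ i, x ≠ ξ i) → G'' x = GfunDeriv2 k ξ α ν x := fun x hx =>
    (hG''a x hx).unique (hasDerivAt_GfunDeriv hx)
  have hGinv : Continuous Ginv := continuous_of_leftInverse_of_rightInverse
    (continuous_iff_continuousAt.2 fun x => (hasDerivAt_Gfun x).continuousAt) hGinv1 hGinv2
  have hσ : Continuous σ := continuous_iff_continuousAt.2 fun x =>
    continuousAt_of_abs_sub_le_rpow hℓσ0 (Eventually.of_forall fun y => hA3 y x)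
  refine ⟨Continuous.comp (g := fun x => GfunDeriv k ξ α ν x * μ x + 1 / 2 * G'' x * σ x ^ 2)
    (continuous_iff_continuousAt.2 fun x => ?_) hGinv, (continuous_GfunDeriv.mul hσ).comp hGinv⟩
  by_cases hx : ∀ i, x ≠ ξ i
  · have hμ : ContinuousAt μ x :=
      continuousAt_of_abs_sub_le_rpow_on_pieces hξ.monotone hℓμ.le hA2ii hx
    have hG''x : ContinuousAt G'' x := (continuousAt_GfunDeriv2 hx).congr
      ((eventually_all.2 fun i => eventually_ne_nhds (hx i)).mono fun y hy => (hG'' y hy).symm)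
    exact (continuous_GfunDeriv.continuousAt.mul hμ).add
      ((continuousAt_const.mul hG''x).mul (hσ.continuousAt.pow 2))
  · obtain ⟨i, rfl⟩ : ∃ i, x = ξ i := by simpa using hx
    have hG''near : GfunDeriv2 k ξ α ν =ᶠ[𝓝[≠] ξ i] G'' :=
      (eventually_forall_ne_nhdsNE hξ.injective i).mono fun y hy => (hG'' y hy).symm
    exact continuousAt_add_half_mul_sq (hμm i) (hμp i) hσ.continuousAt (hA4 i)
      continuous_GfunDeriv.continuousAt (GfunDeriv_apply_eq_one hν0 hsep i)
      ((tendsto_GfunDeriv2_nhdsLT hν0 hsep i).congr' (hG''near.filter_mono (nhdsLT_le_nhdsNE _)))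
      ((tendsto_GfunDeriv2_nhdsGT hν0 hsep i).congr' (hG''near.filter_mono (nhdsGT_le_nhdsNE _)))
      (hα i) (hG''b i)

/-- Under (A1)-(A4), the transformed coefficients `μ̃` and `σ̃` are
continuous on `ℝ`. -/
theorem stmt_7 (p₀ p₁ ℓμ ℓσ : ℝ) (hp₀ : 2 ≤ p₀) (hp₁ : 2 ≤ p₁)
    (hℓμ : 0 < ℓμ) (hℓσ0 : 0 ≤ ℓσ) (hℓσ : ℓσ ≤ ℓμ / 2)
    (μ σ : ℝ → ℝ)
    -- (A1)
    (c₁ : ℝ) (hc₁ : 0 < c₁)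
    (hA1 : ∀ x : ℝ, 2 * x * μ x + (p₀ - 1) * (σ x) ^ 2 ≤ c₁ * (1 + x ^ 2))
    -- (A2): discontinuity points ξ₁ < … < ξ_k, k ≥ 1
    (c₂ : ℝ) (hc₂ : 0 < c₂) (k : ℕ) (hk : 1 ≤ k) (ξ : Fin k → ℝ) (hξ : StrictMono ξ)
    (hA2i : ∀ i : Fin (k + 1), ∀ x ∈ piece k ξ i, ∀ y ∈ piece k ξ i,
      2 * (x - y) * (μ x - μ y) + (p₁ - 1) * (σ x - σ y) ^ 2 ≤ c₂ * |x - y| ^ 2)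
    (hA2ii : ∀ i : Fin (k + 1), ∀ x ∈ piece k ξ i, ∀ y ∈ piece k ξ i,
      |μ x - μ y| ≤ c₂ * (1 + |x| ^ ℓμ + |y| ^ ℓμ) * |x - y|)
    -- (A3)
    (c₃ : ℝ) (hc₃ : 0 < c₃)
    (hA3 : ∀ x y : ℝ, |σ x - σ y| ≤ c₃ * (1 + |x| ^ ℓσ + |y| ^ ℓσ) * |x - y|)
    -- (A4)
    (hA4 : ∀ i : Fin k, σ (ξ i) ≠ 0)
    -- one-sided limits μ(ξ_i-) and μ(ξ_i+)
    (μm μp : Fin k → ℝ)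
    (hμm : ∀ i : Fin k, Filter.Tendsto μ (nhdsWithin (ξ i) (Set.Iio (ξ i))) (nhds (μm i)))
    (hμp : ∀ i : Fin k, Filter.Tendsto μ (nhdsWithin (ξ i) (Set.Ioi (ξ i))) (nhds (μp i)))
    -- α_i = (μ(ξ_i-) - μ(ξ_i+)) / (2 σ(ξ_i)²)
    (α : Fin k → ℝ) (hα : ∀ i : Fin k, α i = (μm i - μp i) / (2 * (σ (ξ i)) ^ 2))
    -- ν ∈ (0, ρ_{ξ,α}):  ν·8|α_i| < 1 encodes ν < 1/(8|α_i|) with the convention 1/0 = ∞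
    (ν : ℝ) (hν0 : 0 < ν)
    (hν1 : ∀ i : Fin k, ν * (8 * |α i|) < 1)
    (hν2 : ∀ i j : Fin k, (i : ℕ) + 1 = (j : ℕ) → ν < (ξ j - ξ i) / 2)
    -- G is differentiable with derivative G'; G' is differentiable off the points ξ_i
    -- with derivative G'', extended to the points ξ_i by the prescribed formula
    (G' G'' Ginv : ℝ → ℝ)
    (hG' : ∀ x : ℝ, HasDerivAt (Gfun k ξ α ν) (G' x) x)
    (hG''a : ∀ x : ℝ, (∀ i : Fin k, x ≠ ξ i) → HasDerivAt G' (G'' x) x)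
    (hG''b : ∀ i : Fin k, G'' (ξ i) = 2 * α i + 2 * (μp i - μ (ξ i)) / (σ (ξ i)) ^ 2)
    -- Ginv is the inverse of the bijection G
    (hGinv1 : ∀ x : ℝ, Ginv (Gfun k ξ α ν x) = x)
    (hGinv2 : ∀ x : ℝ, Gfun k ξ α ν (Ginv x) = x) :
    -- μ̃ = (G'·μ + ½·G''·σ²) ∘ G⁻¹  and  σ̃ = (G'·σ) ∘ G⁻¹
    Continuous (fun x : ℝ =>
      G' (Ginv x) * μ (Ginv x) + (1 / 2) * G'' (Ginv x) * (σ (Ginv x)) ^ 2) ∧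
    Continuous (fun x : ℝ => G' (Ginv x) * σ (Ginv x)) :=
  stmt_7_general ℓμ ℓσ hℓμ hℓσ0 μ σ c₂ k ξ hξ hA2ii c₃ hA3 hA4 μm μp hμm hμp α hα ν hν0 hν2 G' G''
    Ginv hG' hG''a hG''b hGinv1 hGinv2
end

section
/- Let p₀ ∈ [2,∞), ℓ_μ ∈ (0,∞), ℓ_σ ∈ [0, ℓ_μ/2] and assume μ, σ : ℝ → ℝ satisfy conditions (A2)(ii) and (A3). Then there exists c ∈ (0,∞) such that for all n ∈ ℕ with n ≥ 1 and all u, v, w ∈ ℝ, ||u+v|^{p₀−2} − |u|^{p₀−2}|·|μ_n(u)·σ_n(u)|·|w| ≤ c·( |v|^{p₀}·(1 + (n^{3/4}·|w|)^{p₀}) + 1 + |w|^{p₀/2} + |u|^{p₀} ). -/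
/-- The tamed coefficient `f_n(x) = f(x) / (1 + n^{-1/2} |x|^ℓ)`. -/
noncomputable def tame (f : ℝ → ℝ) (ℓ : ℝ) (n : ℕ) (x : ℝ) : ℝ :=
  f x / (1 + (1 / Real.sqrt (n : ℝ)) * |x| ^ ℓ)

open Real

lemma rpow_le_one_add_rpow {a e r : ℝ} (ha : 0 ≤ a) (he : 0 ≤ e) (her : e ≤ r) :
    a ^ e ≤ 1 + a ^ r := by
  rcases le_total a 1 with h | h
  · linarith [rpow_le_one ha h he, rpow_nonneg ha r]
  · linarith [rpow_le_rpow_of_exponent_le h her]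

lemma le_one_add_rpow {x p : ℝ} (hx : 0 ≤ x) (hp : 1 ≤ p) : x ≤ 1 + x ^ p := by
  simpa using rpow_le_one_add_rpow hx zero_le_one hp

lemma add_rpow_le_two_rpow_mul_rpow_add_rpow {a b p : ℝ} (ha : 0 ≤ a) (hb : 0 ≤ b)
    (hp : 0 ≤ p) : (a + b) ^ p ≤ 2 ^ p * (a ^ p + b ^ p) := calc
  (a + b) ^ p ≤ (2 * max a b) ^ p := by
    gcongr
    rw [two_mul]
    exact add_le_add (le_max_left a b) (le_max_right a b)
  _ = 2 ^ p * max a b ^ p := mul_rpow zero_le_two (le_max_of_le_left ha)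
  _ = 2 ^ p * max (a ^ p) (b ^ p) := by rw [rpow_max ha hb hp]
  _ ≤ 2 ^ p * (a ^ p + b ^ p) := by
    gcongr
    exact max_le_add_of_nonneg (rpow_nonneg ha p) (rpow_nonneg hb p)

lemma rpow_mul_le_rpow_add_rpow {x y r : ℝ} (hx : 0 ≤ x) (hy : 0 ≤ y) (hr : 0 ≤ r) :
    x ^ r * y ≤ x ^ (r + 1) + y ^ (r + 1) := calc
  x ^ r * y ≤ max x y ^ r * max x y := by
    gcongr
    exacts [le_max_left x y, le_max_right x y]
  _ = max (x ^ (r + 1)) (y ^ (r + 1)) := by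
    rw [← rpow_add_one' (le_max_of_le_left hx) (by linarith), rpow_max hx hy (by linarith)]
  _ ≤ x ^ (r + 1) + y ^ (r + 1) := max_le_add_of_nonneg (rpow_nonneg hx _) (rpow_nonneg hy _)

lemma one_add_rpow_add_one_le {x ℓ : ℝ} (hx : 0 ≤ x) (hℓ : 0 ≤ ℓ) :
    1 + x ^ (ℓ + 1) ≤ (1 + x) * (1 + x ^ ℓ) := by
  rw [rpow_add_one' hx (by linarith)]
  nlinarith [rpow_nonneg hx ℓ]

lemma one_add_rpow_mul_one_add_le {x ℓ : ℝ} (hx : 0 ≤ x) (hℓ : 0 ≤ ℓ) :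
    (1 + x ^ ℓ) * (1 + x) ≤ 3 * (1 + x ^ (ℓ + 1)) := by
  have hxℓ : x ^ ℓ ≤ 1 + x ^ (ℓ + 1) := rpow_le_one_add_rpow hx hℓ (by linarith)
  have hx1 : x ≤ 1 + x ^ (ℓ + 1) := le_one_add_rpow hx (by linarith)
  calc (1 + x ^ ℓ) * (1 + x) = 1 + x + x ^ ℓ + x ^ (ℓ + 1) := by
        rw [rpow_add_one' hx (by linarith)]; ring
    _ ≤ 3 * (1 + x ^ (ℓ + 1)) := by linarith

lemma exists_mem_uIcc_rpow_sub_rpow_eq {x y : ℝ} (hx : 0 < x) (hy : 0 < y) (q : ℝ) :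
    ∃ c ∈ Set.uIcc x y, x ^ q - y ^ q = q * c ^ (q - 1) * (x - y) := by
  wlog hyx : y ≤ x generalizing x y
  · obtain ⟨c, hc, h⟩ := this hy hx (le_of_not_ge hyx)
    exact ⟨c, Set.uIcc_comm x y ▸ hc, by linear_combination -h⟩
  rcases hyx.eq_or_lt with rfl | hlt
  · exact ⟨y, Set.left_mem_uIcc, by simp⟩
  have hderiv : ∀ z ∈ Set.Icc y x, HasDerivAt (fun z => z ^ q) (q * z ^ (q - 1)) z :=
    fun z hz => hasDerivAt_rpow_const (Or.inl (hy.trans_le hz.1).ne')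
  obtain ⟨c, hc, hslope⟩ := exists_hasDerivAt_eq_slope (fun z => z ^ q) (fun z => q * z ^ (q - 1))
    hlt (fun z hz => (hderiv z hz).continuousAt.continuousWithinAt)
    (fun z hz => hderiv z (Set.Ioo_subset_Icc_self hz))
  refine ⟨c, Set.uIcc_of_ge hyx ▸ Set.Ioo_subset_Icc_self hc, ?_⟩
  rw [hslope]
  field_simp [(sub_pos.2 hlt).ne']

lemma exists_pos_growth_bound_on {f : ℝ → ℝ} {S : Set ℝ} {c ℓ : ℝ} (hℓ : 0 ≤ ℓ)
    (hf : ∀ x ∈ S, ∀ y ∈ S, |f x - f y| ≤ c * (1 + |x| ^ ℓ + |y| ^ ℓ) * |x - y|) :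
    ∃ A, 0 < A ∧ ∀ x ∈ S, |f x| ≤ A * (1 + |x| ^ (ℓ + 1)) := by
  rcases S.eq_empty_or_nonempty with rfl | ⟨a, ha⟩
  · exact ⟨1, one_pos, by simp⟩
  set Q := (1 + |a| ^ ℓ) * (1 + |a|)
  refine ⟨1 + |f a| + 3 * |c| * Q, by positivity, fun x hx => ?_⟩
  have hxa : |x - a| ≤ (1 + |a|) * (1 + |x|) := by
    nlinarith [abs_sub x a, abs_nonneg x, abs_nonneg a]
  have hpow : 1 + |x| ^ ℓ + |a| ^ ℓ ≤ (1 + |a| ^ ℓ) * (1 + |x| ^ ℓ) := by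
    nlinarith [rpow_nonneg (abs_nonneg x) ℓ, rpow_nonneg (abs_nonneg a) ℓ]
  calc |f x| ≤ |f a| + |f x - f a| := by linarith [abs_sub_abs_le_abs_sub (f x) (f a)]
    _ ≤ |f a| + |c| * ((1 + |a| ^ ℓ) * (1 + |x| ^ ℓ)) * ((1 + |a|) * (1 + |x|)) := by
      grw [hf x hx a ha, le_abs_self c, hpow, hxa]
    _ = |f a| + |c| * Q * ((1 + |x| ^ ℓ) * (1 + |x|)) := by ring
    _ ≤ |f a| + |c| * Q * (3 * (1 + |x| ^ (ℓ + 1))) := by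
      grw [one_add_rpow_mul_one_add_le (abs_nonneg x) hℓ]
    _ ≤ (1 + |f a| + 3 * |c| * Q) * (1 + |x| ^ (ℓ + 1)) := by
      have hX : 1 ≤ 1 + |x| ^ (ℓ + 1) := le_add_of_nonneg_right (rpow_nonneg (abs_nonneg x) _)
      nlinarith [le_mul_of_one_le_right (abs_nonneg (f a)) hX]

lemma exists_mem_piece_of_ne {k : ℕ} {ξ : Fin k → ℝ} (hξ : StrictMono ξ) {x : ℝ}
    (hx : ∀ j, ξ j ≠ x) : ∃ i, x ∈ piece k ξ i := by
  -- `x` lies in the piece whose index is the number of breakpoints below `x`.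
  set F := Finset.univ.filter fun j : Fin k => ξ j < x
  have hFk : F.card ≤ k := by simpa using Finset.card_filter_le Finset.univ fun j => ξ j < x
  refine ⟨⟨F.card, Nat.lt_succ_of_le hFk⟩, fun j hj => ?_, fun j hj => ?_⟩
  · by_contra! hxj
    have hsub : F ⊆ Finset.Iio j := fun j' hj' =>
      Finset.mem_Iio.2 (hξ.lt_iff_lt.1 ((Finset.mem_filter.1 hj').2.trans_le hxj))
    have := Finset.card_le_card hsub
    simp only [Fin.card_Iio] at this hj
    omega
  · by_contra! hxj
    have hsub : Finset.Iic j ⊆ F := fun j' hj' => Finset.mem_filter.2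
      ⟨Finset.mem_univ _, (hξ.monotone (Finset.mem_Iic.1 hj')).trans_lt
        (hxj.lt_of_ne (hx j))⟩
    have := Finset.card_le_card hsub
    simp only [Fin.card_Iic] at this hj
    omega

lemma exists_pos_growth_bound_of_piecewise {f : ℝ → ℝ} {c ℓ : ℝ} (hℓ : 0 ≤ ℓ) {k : ℕ}
    {ξ : Fin k → ℝ} (hξ : StrictMono ξ)
    (hf : ∀ i, ∀ x ∈ piece k ξ i, ∀ y ∈ piece k ξ i,
      |f x - f y| ≤ c * (1 + |x| ^ ℓ + |y| ^ ℓ) * |x - y|) :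
    ∃ A, 0 < A ∧ ∀ x, |f x| ≤ A * (1 + |x| ^ (ℓ + 1)) := by
  choose A hA hfA using fun i => exists_pos_growth_bound_on hℓ (hf i)
  obtain ⟨M₁, hM₁⟩ := Finite.exists_le A
  obtain ⟨M₂, hM₂⟩ := Finite.exists_le fun j => |f (ξ j)|
  have hM : 0 < max M₁ M₂ := lt_max_of_lt_left ((hA 0).trans_le (hM₁ 0))
  refine ⟨max M₁ M₂, hM, fun x => ?_⟩
  by_cases hx : ∃ j, ξ j = x
  · obtain ⟨j, rfl⟩ := hx
    calc |f (ξ j)| ≤ max M₁ M₂ := (hM₂ j).trans (le_max_right _ _)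
      _ ≤ max M₁ M₂ * (1 + |ξ j| ^ (ℓ + 1)) :=
        le_mul_of_one_le_right hM.le (le_add_of_nonneg_right (rpow_nonneg (abs_nonneg _) _))
  · push Not at hx
    obtain ⟨i, hi⟩ := exists_mem_piece_of_ne hξ hx
    calc |f x| ≤ A i * (1 + |x| ^ (ℓ + 1)) := hfA i x hi
      _ ≤ max M₁ M₂ * (1 + |x| ^ (ℓ + 1)) := by
        grw [hM₁ i, le_max_left M₁ M₂]

lemma abs_tame (f : ℝ → ℝ) (ℓ : ℝ) (n : ℕ) (x : ℝ) :
    |tame f ℓ n x| = |f x| / (1 + 1 / √(n : ℝ) * |x| ^ ℓ) := by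
  rw [tame, abs_div, abs_of_pos (show 0 < 1 + 1 / √(n : ℝ) * |x| ^ ℓ by positivity)]

lemma abs_tame_le_abs (f : ℝ → ℝ) (ℓ : ℝ) (n : ℕ) (x : ℝ) : |tame f ℓ n x| ≤ |f x| := by
  rw [abs_tame]
  exact div_le_self (abs_nonneg _) (le_add_of_nonneg_right (by positivity))

lemma abs_tame_le_of_growth {f : ℝ → ℝ} {A ℓ : ℝ} (hA : 0 ≤ A) (hℓ : 0 ≤ ℓ)
    (hf : ∀ x, |f x| ≤ A * (1 + |x| ^ (ℓ + 1))) {n : ℕ} (hn : 1 ≤ n) (x : ℝ) :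
    |tame f ℓ n x| ≤ A * √(n : ℝ) * (1 + |x|) := by
  have hsqrt : 1 ≤ √(n : ℝ) := one_le_sqrt.2 (by exact_mod_cast hn)
  rw [abs_tame, div_le_iff₀ (by positivity)]
  calc |f x| ≤ A * ((1 + |x|) * (1 + |x| ^ ℓ)) := by
        grw [hf x, one_add_rpow_add_one_le (abs_nonneg x) hℓ]
    _ ≤ A * ((1 + |x|) * (√(n : ℝ) + |x| ^ ℓ)) := by grw [← hsqrt]
    _ = A * √(n : ℝ) * (1 + |x|) * (1 + 1 / √(n : ℝ) * |x| ^ ℓ) := by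
        field_simp

lemma abs_tame_le_of_growth_of_le_half {g : ℝ → ℝ} {B ℓ ℓ' : ℝ} (hB : 0 ≤ B) (hℓ' : 0 ≤ ℓ')
    (hℓℓ' : ℓ' ≤ ℓ / 2) (hg : ∀ x, |g x| ≤ B * (1 + |x| ^ (ℓ' + 1))) {n : ℕ} (hn : 1 ≤ n)
    (x : ℝ) : |tame g ℓ n x| ≤ 3 * B * (n : ℝ) ^ (1 / 4 : ℝ) * (1 + |x|) := by
  set r := (n : ℝ) ^ (1 / 4 : ℝ)
  set a := |x| ^ (ℓ / 2)
  have hr : 1 ≤ r := one_le_rpow (by exact_mod_cast hn) (by norm_num)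
  have hsqrt : √(n : ℝ) = r ^ 2 := by
    rw [sqrt_eq_rpow, ← rpow_natCast, ← rpow_mul (Nat.cast_nonneg n)]
    norm_num
  have ha : |x| ^ ℓ = a ^ 2 := by
    rw [← rpow_natCast, ← rpow_mul (abs_nonneg x)]
    norm_num
  have ha0 : 0 ≤ a := rpow_nonneg (abs_nonneg x) _
  -- AM-GM: `a ≤ r + a ^ 2 / r`
  have hamgm : 2 + a ≤ 3 * r * (1 + 1 / r ^ 2 * a ^ 2) := by
    rw [show 3 * r * (1 + 1 / r ^ 2 * a ^ 2) = (3 * r ^ 2 + 3 * a ^ 2) / r by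
      field_simp, le_div_iff₀ (by positivity)]
    nlinarith [sq_nonneg (a - r)]
  rw [abs_tame, div_le_iff₀ (by positivity), hsqrt, ha]
  calc |g x| ≤ B * ((1 + |x|) * (1 + |x| ^ ℓ')) := by
        grw [hg x, one_add_rpow_add_one_le (abs_nonneg x) hℓ']
    _ ≤ B * ((1 + |x|) * (2 + a)) := by
        grw [rpow_le_one_add_rpow (abs_nonneg x) hℓ' hℓℓ']
        linarith
    _ ≤ B * ((1 + |x|) * (3 * r * (1 + 1 / r ^ 2 * a ^ 2))) := by grw [hamgm]
    _ = 3 * B * r * (1 + |x|) * (1 + 1 / r ^ 2 * a ^ 2) := by ring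

lemma abs_tame_mul_tame_le {f g : ℝ → ℝ} {A B ℓ ℓ' : ℝ} (hA : 0 ≤ A) (hB : 0 ≤ B)
    (hℓ' : 0 ≤ ℓ') (hℓℓ' : ℓ' ≤ ℓ / 2) (hf : ∀ x, |f x| ≤ A * (1 + |x| ^ (ℓ + 1)))
    (hg : ∀ x, |g x| ≤ B * (1 + |x| ^ (ℓ' + 1))) {n : ℕ} (hn : 1 ≤ n) (x : ℝ) :
    |tame f ℓ n x * tame g ℓ n x| ≤ 3 * A * B * (n : ℝ) ^ (3 / 4 : ℝ) * (1 + |x|) ^ 2 := by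
  have hn' : (n : ℝ) ^ (3 / 4 : ℝ) = √(n : ℝ) * (n : ℝ) ^ (1 / 4 : ℝ) := by
    rw [sqrt_eq_rpow, ← rpow_add (by exact_mod_cast hn)]
    norm_num
  rw [abs_mul, hn']
  grw [abs_tame_le_of_growth hA (by linarith) hf hn x,
    abs_tame_le_of_growth_of_le_half hB hℓ' hℓℓ' hg hn x]
  exact le_of_eq (by ring)

lemma abs_tame_mul_tame_le_of_abs_le_one {f g : ℝ → ℝ} {A B ℓ ℓ' ℓ'' : ℝ} (hA : 0 ≤ A)
    (hB : 0 ≤ B) (hf : ∀ x, |f x| ≤ A * (1 + |x| ^ ℓ')) (hg : ∀ x, |g x| ≤ B * (1 + |x| ^ ℓ''))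
    (hℓ' : 0 ≤ ℓ') (hℓ'' : 0 ≤ ℓ'') (n : ℕ) {x : ℝ} (hx : |x| ≤ 1) :
    |tame f ℓ n x * tame g ℓ n x| ≤ 4 * A * B := by
  have hf1 : |f x| ≤ 2 * A := by
    grw [hf x, rpow_le_one (abs_nonneg x) hx hℓ']; linarith
  have hg1 : |g x| ≤ 2 * B := by
    grw [hg x, rpow_le_one (abs_nonneg x) hx hℓ'']; linarith
  rw [abs_mul]
  grw [abs_tame_le_abs, abs_tame_le_abs, hf1, hg1]
  exact le_of_eq (by ring)

section Estimate

variable {p K N P u v w : ℝ}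

lemma abs_rpow_sub_rpow_mul_le_of_abs_le_one (hp : 2 ≤ p) (hN : 1 ≤ N) (hu : |u| ≤ 1)
    (hP0 : 0 ≤ P) (hP : P ≤ K) :
    |(|u + v| ^ (p - 2) - |u| ^ (p - 2))| * P * |w| ≤
      2 ^ p * K * (|v| ^ p * (1 + (N * |w|) ^ p) + 1 + |w| ^ (p / 2) + |u| ^ p) := by
  have hK : 0 ≤ K := hP0.trans hP
  have hv : 1 ≤ 1 + |v| := le_add_of_nonneg_right (abs_nonneg v)
  have hbound : (1 + |v|) ^ (p - 2) ≤ 2 ^ p * (1 + |v| ^ p) := calc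
    (1 + |v|) ^ (p - 2) ≤ (1 + |v|) ^ p := rpow_le_rpow_of_exponent_le hv (by linarith)
    _ ≤ 2 ^ p * (1 ^ p + |v| ^ p) :=
      add_rpow_le_two_rpow_mul_rpow_add_rpow zero_le_one (abs_nonneg v) (by linarith)
    _ = 2 ^ p * (1 + |v| ^ p) := by rw [one_rpow]
  have hD : |(|u + v| ^ (p - 2) - |u| ^ (p - 2))| ≤ 2 ^ p * (1 + |v| ^ p) := by
    refine abs_sub_le_of_nonneg_of_le (rpow_nonneg (abs_nonneg _) _) ?_
      (rpow_nonneg (abs_nonneg _) _) ?_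
    · refine (rpow_le_rpow (abs_nonneg _) ?_ (by linarith)).trans hbound
      linarith [abs_add_le u v]
    · exact ((rpow_le_one (abs_nonneg u) hu (by linarith)).trans
        (one_le_rpow hv (by linarith))).trans hbound
  have hNw : |w| ≤ N * |w| := le_mul_of_one_le_left (abs_nonneg w) hN
  have hw : |v| ^ p * |w| ≤ |v| ^ p * (1 + (N * |w|) ^ p) := by
    grw [hNw, ← le_one_add_rpow (by positivity) (by linarith)]
  calc _ ≤ 2 ^ p * (1 + |v| ^ p) * K * |w| := by grw [hD, hP]
    _ = 2 ^ p * K * (|w| + |v| ^ p * |w|) := by ring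
    _ ≤ _ := by
      refine mul_le_mul_of_nonneg_left ?_ (by positivity)
      linarith [le_one_add_rpow (abs_nonneg w) (by linarith : 1 ≤ p / 2),
        rpow_nonneg (abs_nonneg u) p]

lemma abs_rpow_sub_rpow_mul_le_of_abs_le_two_mul (hp : 2 ≤ p) (hN : 0 ≤ N) (hK : 0 ≤ K)
    (hu : 1 ≤ |u|) (huv : |u| ≤ 2 * |v|) (hP0 : 0 ≤ P) (hP : P ≤ K * N * (1 + |u|) ^ 2) :
    |(|u + v| ^ (p - 2) - |u| ^ (p - 2))| * P * |w| ≤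
      4 ^ p * K * (|v| ^ p * (1 + (N * |w|) ^ p) + 1 + |w| ^ (p / 2) + |u| ^ p) := by
  set s := 4 * |v|
  have hs : 0 < s := by linarith
  have hD : |(|u + v| ^ (p - 2) - |u| ^ (p - 2))| ≤ s ^ (p - 2) := by
    refine abs_sub_le_of_nonneg_of_le (rpow_nonneg (abs_nonneg _) _) ?_
      (rpow_nonneg (abs_nonneg _) _) (rpow_le_rpow (abs_nonneg _) (by linarith) (by linarith))
    exact rpow_le_rpow (abs_nonneg _) (by linarith [abs_add_le u v]) (by linarith)
  have hss : s ^ (p - 2) * s ^ 2 = s ^ p := by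
    rw [← rpow_natCast, ← rpow_add hs]
    norm_num
  calc _ ≤ s ^ (p - 2) * (K * N * s ^ 2) * |w| := by
        grw [hD, hP, show 1 + |u| ≤ s by linarith]
    _ = K * s ^ p * (N * |w|) := by rw [← hss]; ring
    _ ≤ K * s ^ p * (1 + (N * |w|) ^ p) := by
        grw [← le_one_add_rpow (by positivity) (by linarith)]
    _ = 4 ^ p * K * (|v| ^ p * (1 + (N * |w|) ^ p)) := by
        rw [mul_rpow (by norm_num) (abs_nonneg v)]; ring
    _ ≤ _ := by
      gcongr
      linarith [rpow_nonneg (abs_nonneg w) (p / 2), rpow_nonneg (abs_nonneg u) p]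

lemma abs_rpow_sub_rpow_mul_le_of_two_mul_le_abs (hp : 2 ≤ p) (hN : 0 ≤ N) (hK : 0 ≤ K)
    (hu : 1 ≤ |u|) (hvu : 2 * |v| ≤ |u|) (hP0 : 0 ≤ P) (hP : P ≤ K * N * (1 + |u|) ^ 2) :
    |(|u + v| ^ (p - 2) - |u| ^ (p - 2))| * P * |w| ≤
      8 * p * 2 ^ p * K * (|v| ^ p * (1 + (N * |w|) ^ p) + 1 + |w| ^ (p / 2) + |u| ^ p) := by
  have hq : 0 ≤ p - 2 := by linarith
  have huv : |u| ≤ |u + v| + |v| := by simpa using abs_sub (u + v) v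
  have hXY : |(|u + v| - |u|)| ≤ |v| := by simpa using abs_abs_sub_abs_le_abs_sub (u + v) u
  obtain ⟨c, hc, hmvt⟩ :=
    exists_mem_uIcc_rpow_sub_rpow_eq (by linarith : 0 < |u + v|) (by linarith : 0 < |u|) (p - 2)
  obtain ⟨hc₁, hc₂⟩ : c ∈ Set.Icc (|u| / 2) (2 * |u|) :=
    Set.uIcc_subset_Icc ⟨by linarith, by linarith [abs_add_le u v]⟩ ⟨by linarith, by linarith⟩ hc
  have hc0 : 0 < c := by linarith
  have hD : |(|u + v| ^ (p - 2) - |u| ^ (p - 2))| ≤ (p - 2) * c ^ (p - 2 - 1) * |v| := by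
    rw [hmvt, abs_mul, abs_of_nonneg (by positivity)]
    grw [hXY]
  have hP' : P ≤ 16 * K * N * c ^ 2 := by
    grw [hP, show 1 + |u| ≤ 4 * c by linarith]
    exact le_of_eq (by ring)
  have hcc : c ^ (p - 2 - 1) * c ^ 2 = c ^ (p - 1) := by
    rw [← rpow_natCast, ← rpow_add hc0]
    norm_num
    ring_nf
  have hcp : c ^ (p - 1) ≤ 2 ^ (p - 1) * |u| ^ (p - 1) := by
    rw [← mul_rpow zero_le_two (abs_nonneg u)]
    exact rpow_le_rpow hc0.le hc₂ (by linarith)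
  have hyoung : |u| ^ (p - 1) * (|v| * (N * |w|)) ≤ |u| ^ p + |v| ^ p * (N * |w|) ^ p := by
    have := rpow_mul_le_rpow_add_rpow (abs_nonneg u)
      (by positivity : 0 ≤ |v| * (N * |w|)) (by linarith : 0 ≤ p - 1)
    rwa [sub_add_cancel, mul_rpow (abs_nonneg v) (by positivity)] at this
  calc _ ≤ (p - 2) * c ^ (p - 2 - 1) * |v| * (16 * K * N * c ^ 2) * |w| := by grw [hD, hP']
    _ = 16 * (p - 2) * K * c ^ (p - 1) * (|v| * (N * |w|)) := by rw [← hcc]; ring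
    _ ≤ 16 * (p - 2) * K * (2 ^ (p - 1) * |u| ^ (p - 1)) * (|v| * (N * |w|)) := by grw [hcp]
    _ = 8 * (p - 2) * 2 ^ p * K * (|u| ^ (p - 1) * (|v| * (N * |w|))) := by
        rw [rpow_sub_one two_ne_zero]; ring
    _ ≤ 8 * (p - 2) * 2 ^ p * K * (|u| ^ p + |v| ^ p * (N * |w|) ^ p) := by grw [hyoung]
    _ ≤ _ := by
      gcongr ?_ * ?_
      · gcongr; linarith
      · rw [mul_one_add]
        linarith [rpow_nonneg (abs_nonneg v) p, rpow_nonneg (abs_nonneg w) (p / 2)]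

lemma abs_rpow_sub_rpow_mul_le (hp : 2 ≤ p) (hN : 1 ≤ N) (hK : 0 ≤ K) (hP0 : 0 ≤ P)
    (hP₁ : |u| ≤ 1 → P ≤ K) (hP : P ≤ K * N * (1 + |u|) ^ 2) :
    |(|u + v| ^ (p - 2) - |u| ^ (p - 2))| * P * |w| ≤
      8 * p * 4 ^ p * K * (|v| ^ p * (1 + (N * |w|) ^ p) + 1 + |w| ^ (p / 2) + |u| ^ p) := by
  have h24 : (2 : ℝ) ^ p ≤ 4 ^ p := rpow_le_rpow zero_le_two (by norm_num) (by linarith)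
  have h4 : (0 : ℝ) ≤ 4 ^ p := by positivity
  have hN₀ : 0 ≤ N := by linarith
  rcases le_total |u| 1 with hu | hu
  · refine (abs_rpow_sub_rpow_mul_le_of_abs_le_one hp hN hu hP0 (hP₁ hu)).trans ?_
    gcongr
    nlinarith
  rcases le_total |u| (2 * |v|) with huv | hvu
  · refine (abs_rpow_sub_rpow_mul_le_of_abs_le_two_mul hp hN₀ hK hu huv hP0 hP).trans ?_
    gcongr
    nlinarith
  · refine (abs_rpow_sub_rpow_mul_le_of_two_mul_le_abs hp hN₀ hK hu hvu hP0 hP).trans ?_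
    gcongr

end Estimate

theorem stmt_19_general (p₀ ℓμ ℓσ : ℝ) (hp₀ : 2 ≤ p₀) (hℓσ0 : 0 ≤ ℓσ)
    (hℓσ : ℓσ ≤ ℓμ / 2)
    (μ σ : ℝ → ℝ)
    (c₂ : ℝ) (k : ℕ) (ξ : Fin k → ℝ) (hξ : StrictMono ξ)
    (hA2ii : ∀ i : Fin (k + 1), ∀ x ∈ piece k ξ i, ∀ y ∈ piece k ξ i,
      |μ x - μ y| ≤ c₂ * (1 + |x| ^ ℓμ + |y| ^ ℓμ) * |x - y|)
    (c₃ : ℝ)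
    (hA3 : ∀ x y : ℝ, |σ x - σ y| ≤ c₃ * (1 + |x| ^ ℓσ + |y| ^ ℓσ) * |x - y|) :
    ∃ c : ℝ, 0 < c ∧ ∀ n : ℕ, 1 ≤ n → ∀ u v w : ℝ,
      abs (|u + v| ^ (p₀ - 2) - |u| ^ (p₀ - 2)) * |tame μ ℓμ n u * tame σ ℓμ n u| * |w| ≤
        c * (|v| ^ p₀ * (1 + ((n : ℝ) ^ ((3 : ℝ) / 4) * |w|) ^ p₀) + 1 + |w| ^ (p₀ / 2)
          + |u| ^ p₀) := by
  obtain ⟨A, hA, hμ⟩ := exists_pos_growth_bound_of_piecewise (by linarith : 0 ≤ ℓμ) hξ hA2ii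
  obtain ⟨B, hB, hσ⟩ :=
    exists_pos_growth_bound_on (S := Set.univ) hℓσ0 fun x _ y _ => hA3 x y
  replace hσ : ∀ x, |σ x| ≤ B * (1 + |x| ^ (ℓσ + 1)) := fun x => hσ x trivial
  refine ⟨8 * p₀ * 4 ^ p₀ * (4 * A * B), by positivity, fun n hn u v w => ?_⟩
  refine abs_rpow_sub_rpow_mul_le hp₀ (one_le_rpow (by exact_mod_cast hn) (by norm_num))
    (by positivity) (abs_nonneg _)
    (abs_tame_mul_tame_le_of_abs_le_one hA.le hB.le hμ hσ (by linarith) (by linarith) n) ?_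
  grw [abs_tame_mul_tame_le hA.le hB.le hℓσ0 hℓσ hμ hσ hn u]
  gcongr
  linarith

/-- If `μ, σ` satisfy (A2)(ii) and (A3) with `p₀ ∈ [2,∞)`, `ℓμ ∈ (0,∞)`
and `ℓσ ∈ [0, ℓμ/2]`, then there is `c ∈ (0,∞)` such that for all `n ≥ 1` and all
`u, v, w ∈ ℝ`,
`||u+v|^{p₀-2} - |u|^{p₀-2}|·|μ_n(u)·σ_n(u)|·|w|
  ≤ c·(|v|^{p₀}·(1 + (n^{3/4}|w|)^{p₀}) + 1 + |w|^{p₀/2} + |u|^{p₀})`. -/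
theorem stmt_19 (p₀ ℓμ ℓσ : ℝ) (hp₀ : 2 ≤ p₀) (hℓμ : 0 < ℓμ) (hℓσ0 : 0 ≤ ℓσ)
    (hℓσ : ℓσ ≤ ℓμ / 2)
    (μ σ : ℝ → ℝ)
    (c₂ : ℝ) (hc₂ : 0 < c₂) (k : ℕ) (ξ : Fin k → ℝ) (hξ : StrictMono ξ)
    (hA2ii : ∀ i : Fin (k + 1), ∀ x ∈ piece k ξ i, ∀ y ∈ piece k ξ i,
      |μ x - μ y| ≤ c₂ * (1 + |x| ^ ℓμ + |y| ^ ℓμ) * |x - y|)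
    (c₃ : ℝ) (hc₃ : 0 < c₃)
    (hA3 : ∀ x y : ℝ, |σ x - σ y| ≤ c₃ * (1 + |x| ^ ℓσ + |y| ^ ℓσ) * |x - y|) :
    ∃ c : ℝ, 0 < c ∧ ∀ n : ℕ, 1 ≤ n → ∀ u v w : ℝ,
      abs (|u + v| ^ (p₀ - 2) - |u| ^ (p₀ - 2)) * |tame μ ℓμ n u * tame σ ℓμ n u| * |w| ≤
        c * (|v| ^ p₀ * (1 + ((n : ℝ) ^ ((3 : ℝ) / 4) * |w|) ^ p₀) + 1 + |w| ^ (p₀ / 2)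
          + |u| ^ p₀) :=
  stmt_19_general p₀ ℓμ ℓσ hp₀ hℓσ0 hℓσ μ σ c₂ k ξ hξ hA2ii c₃ hA3
end
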